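/- arXiv:2202.12489 — 2 statements merged into one kernel-verified Lean document; each statement's English description precedes it below -/
import Mathlib

section
/- Let n ≥ 2 and 1 ≤ k ≤ n−1. For every t with 1 ≤ t ≤ n−1 and all vectors u_1, …, u_k ∈ H_1, one has Ψ(Φ_t(u_1), Φ_t(u_2), …, Φ_t(u_k)) = q^{k−1} · Φ_t(Ψ(u_1, …, u_k)) in T_n. (Twisted equivariance of the iterated product map under the one-crossing braid generators.) -/
open scoped BigOperators

set_option maxHeartbeats 1000000
set_option synthInstance.maxHeartbeats 400000

noncomputable section

/-- The ground field `K = ℂ(q)`. -/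
abbrev K : Type := RatFunc ℂ

/-- The variable `q` of `K = ℂ(q)`. -/
def q : K := RatFunc.X

/-- `T n` models the `n`-th tensor power of the vector representation of
`U_q(gl(1|1))`, as functions on binary strings of length `n`. -/
abbrev T (n : ℕ) : Type := (Fin n → Fin 2) → K

/-- The standard basis vector `v_α` of `T n`. -/
def v (n : ℕ) (α : Fin n → Fin 2) : T n := fun β => if β = α then 1 else 0

/-- `v₀^{⊗ n}`, the basis vector of the all-zeroes string. -/
def v0 (n : ℕ) : T n := v n (fun _ => 0)

/-- `w n i` is the basis vector whose string has a single `1` in (1-indexed) position `i`. -/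
def w (n i : ℕ) : T n := v n (fun j => if (j : ℕ) + 1 = i then 1 else 0)

/-- `e i = -w_i + q⁻¹ w_{i+1}`. -/
def e (n i : ℕ) : T n := -(w n i) + q⁻¹ • w n (i + 1)

/-- The `R`-matrix on a pair of strands: entry `Rmat out inp`. -/
def Rmat : Fin 2 × Fin 2 → Fin 2 × Fin 2 → K := fun out inp =>
  if inp = (0, 0) then (if out = (0, 0) then q else 0)
  else if inp = (1, 0) then (if out = (0, 1) then 1 else 0)
  else if inp = (0, 1) then
    (if out = (1, 0) then 1 else if out = (0, 1) then q - q⁻¹ else 0)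
  else (if out = (1, 1) then -q⁻¹ else 0)

/-- The `R`-matrix acting at positions `i`, `j` (0-indexed) of `T n`. -/
def PhiAux (n : ℕ) (i j : Fin n) : T n →ₗ[K] T n where
  toFun f := fun β => ∑ p : Fin 2 × Fin 2,
    Rmat (β i, β j) p * f (Function.update (Function.update β i p.1) j p.2)
  map_add' f g := by
    funext β
    simp only [Pi.add_apply]
    rw [← Finset.sum_add_distrib]
    exact Finset.sum_congr rfl fun p _ => by simp [mul_add]
  map_smul' c f := by
    funext β
    simp only [Pi.smul_apply, smul_eq_mul, RingHom.id_apply]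
    rw [Finset.mul_sum]
    exact Finset.sum_congr rfl fun p _ => by ring

/-- `Phi n t` is the map induced by the braid generator `σ_t` (with `1 ≤ t ≤ n-1`),
acting through the `R`-matrix at (1-indexed) positions `(t, t+1)`. -/
def Phi (n t : ℕ) : T n →ₗ[K] T n :=
  if h : 0 < t ∧ t < n then PhiAux n ⟨t - 1, by omega⟩ ⟨t, h.2⟩ else 0

/-- The action of `E` on `T n`. -/
def En (n : ℕ) : T n →ₗ[K] T n where
  toFun f := fun β => ∑ i : Fin n,
    if β i = 0 then
      ((-1 : K) ^ (Finset.univ.filter (fun j : Fin n => j < i ∧ β j = 1)).card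
        * q⁻¹ ^ (n - 1 - (i : ℕ))) * f (Function.update β i 1)
    else 0
  map_add' f g := by
    funext β
    simp only [Pi.add_apply]
    rw [← Finset.sum_add_distrib]
    refine Finset.sum_congr rfl fun i _ => ?_
    by_cases h : β i = 0 <;> simp [h, mul_add]
  map_smul' c f := by
    funext β
    simp only [Pi.smul_apply, smul_eq_mul, RingHom.id_apply]
    rw [Finset.mul_sum]
    refine Finset.sum_congr rfl fun i _ => ?_
    by_cases h : β i = 0 <;> simp [h] <;> ring

/-- The action of `F` on `T n`. -/
def Fn (n : ℕ) : T n →ₗ[K] T n where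
  toFun f := fun β => ∑ i : Fin n,
    if β i = 1 then
      ((-1 : K) ^ (Finset.univ.filter (fun j : Fin n => j < i ∧ β j = 1)).card
        * q ^ (i : ℕ)) * f (Function.update β i 0)
    else 0
  map_add' f g := by
    funext β
    simp only [Pi.add_apply]
    rw [← Finset.sum_add_distrib]
    refine Finset.sum_congr rfl fun i _ => ?_
    by_cases h : β i = 1 <;> simp [h, mul_add]
  map_smul' c f := by
    funext β
    simp only [Pi.smul_apply, smul_eq_mul, RingHom.id_apply]
    rw [Finset.mul_sum]
    refine Finset.sum_congr rfl fun i _ => ?_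
    by_cases h : β i = 1 <;> simp [h] <;> ring

/-- The number of `1`s in a binary string. -/
def wt {n : ℕ} (α : Fin n → Fin 2) : ℕ := (Finset.univ.filter (fun i => α i = 1)).card

/-- `Tk n k` is the span of the basis vectors with exactly `k` entries equal to `1`. -/
def Tk (n k : ℕ) : Submodule K (T n) :=
  Submodule.span K {f : T n | ∃ α, wt α = k ∧ f = v n α}

/-- `Hk n k` is the space of highest weight vectors of weight `(n-k)ε₁ + kε₂`. -/
def Hk (n k : ℕ) : Submodule K (T n) := LinearMap.ker (En n) ⊓ Tk n k

/-- The bilinear product `m` on `T n`. -/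
def mul2 (n : ℕ) (f g : T n) : T n := fun γ =>
  ∑ α : Fin n → Fin 2,
    if (∀ i, α i = 1 → γ i = 1) then
      ((-1 : K) ^ (∑ p ∈ Finset.univ.filter (fun p : Fin n × Fin n => p.1 < p.2),
          (((fun i => if α i = 1 then 0 else γ i) p.1 : Fin 2) : ℕ) * ((α p.2 : Fin 2) : ℕ)))
        * f α * g (fun i => if α i = 1 then 0 else γ i)
    else 0

/-- The left-iterated product `Ψ(u_1, …, u_k) = m(…m(m(u_1,u_2),u_3)…,u_k)`. -/
def Psi (n : ℕ) : (k : ℕ) → (Fin k → T n) → T n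
  | 0, _ => v0 n
  | 1, u => u 0
  | (k + 2), u => mul2 n (Psi n (k + 1) (fun i => u i.castSucc)) (u (Fin.last (k + 1)))

/-- Concatenation (tensor product) `T a ⊗ T b → T (a + b)`. -/
def conc {a b : ℕ} (f : T a) (g : T b) : T (a + b) := fun γ =>
  f (fun i => γ (Fin.castAdd b i)) * g (fun i => γ (Fin.natAdd a i))

/-- Identification `T a ≃ T b` for `a = b`. -/
def castT {a b : ℕ} (h : a = b) (f : T a) : T b := fun γ => f (fun i => γ (Fin.cast h i))

/-- The block vector `Θ_b = Σ_{r=0}^{b-1} (-1)^r q^{-(b-1-r)} v_{β(r)}`. -/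
def Theta (b : ℕ) : T b :=
  ∑ r : Fin b, ((-1 : K) ^ (r : ℕ) * q⁻¹ ^ (b - 1 - (r : ℕ))) •
    v b (fun i => if i = r then 0 else 1)

/-- The map induced by the braid `λ = σ_{n-1} ⋯ σ_1`. -/
def Lam (n : ℕ) : T n →ₗ[K] T n :=
  ((List.range (n - 1)).map (fun t => Phi n (t + 1))).foldl (fun acc g => g ∘ₗ acc) LinearMap.id

/-- The Vandermonde-type matrix `B(n)`. -/
def B (n : ℕ) : Matrix (Fin n) (Fin n) K :=
  fun i j => q ^ ((i : ℤ) * (n : ℤ) * ((n : ℤ) - 1 - 2 * (j : ℤ)))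

/-- `C(n) = B(n)⁻¹`. -/
def Cmat (n : ℕ) : Matrix (Fin n) (Fin n) K := (B n)⁻¹

/-- A combinatorial string `(a_1, b_1, a_2, b_2, …, b_l, a_{l+1})`. -/
structure GString where
  l : ℕ
  a : Fin (l + 1) → ℕ
  b : Fin l → ℕ

/-- Membership of a string in `S_k` (for strands number `n`). -/
def memSk (n k : ℕ) (s : GString) : Prop :=
  (∀ i, 2 ≤ s.b i) ∧ (∑ i, (s.b i - 1)) = k ∧ ((∑ i, s.a i) + ∑ i, s.b i) = n

/-- The length of the string, computed blockwise. -/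
def lenOf : (l : ℕ) → (Fin (l + 1) → ℕ) → (Fin l → ℕ) → ℕ
  | 0, a, _ => a 0
  | (l + 1), a, b => (a 0 + b 0) + lenOf l (fun i => a i.succ) (fun i => b i.succ)

/-- The concatenation `v₀^{⊗a_1} ⊗ Θ_{b_1} ⊗ ⋯ ⊗ Θ_{b_l} ⊗ v₀^{⊗a_{l+1}}`. -/
def rawphi : (l : ℕ) → (a : Fin (l + 1) → ℕ) → (b : Fin l → ℕ) → T (lenOf l a b)
  | 0, a, _ => v0 (a 0)
  | (l + 1), a, b =>
      conc (conc (v0 (a 0)) (Theta (b 0)))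
        (rawphi l (fun i => a i.succ) (fun i => b i.succ))

/-- `φ(s) ∈ T n`, the vector associated to a string `s`. -/
def phi (n : ℕ) (s : GString) : T n :=
  if h : lenOf s.l s.a s.b = n then castT h (rawphi s.l s.a s.b) else 0

/-! Up to sign, `mul2` is the product of an exterior algebra: for disjoint strings
`m(v_α, v_β) = (-1) ^ c(α, β) v_{α+β}`, where `c(α, β)` counts the pairs `l < m` with
`β_l = α_m = 1`. The map `Φ_t` only changes the strands `t, t+1`, and the part of the sign coming
from pairs between these two strands and the others only depends on the number of 1s on them,
which the R-matrix preserves. Hence `m(Φ_t f, Φ_t g) = q • Φ_t (m(f, g))` reduces to a finite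
check on two strands, and iterating it along `Ψ` gives the factor `q ^ (k - 1)`. -/

open Finset Function

section TwistedEquivariance

variable {n : ℕ}

def crossing (x y : Fin n → ℕ) : ℕ :=
  ∑ p ∈ univ.filter (fun p : Fin n × Fin n => p.1 < p.2), y p.1 * x p.2

lemma crossing_eq_sum_left (x y : Fin n → ℕ) :
    crossing x y = ∑ m, x m * ∑ l ∈ Iio m, y l := by
  simp only [crossing, sum_filter, Fintype.sum_prod_type, ← filter_gt_eq_Iio, mul_sum]
  rw [sum_comm]
  exact sum_congr rfl fun m _ => sum_congr rfl fun l _ => by split_ifs <;> simp [mul_comm]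

lemma crossing_eq_sum_right (x y : Fin n → ℕ) :
    crossing x y = ∑ l, y l * ∑ m ∈ Ioi l, x m := by
  simp only [crossing, sum_filter, Fintype.sum_prod_type, ← filter_lt_eq_Ioi, mul_sum]
  exact sum_congr rfl fun l _ => sum_congr rfl fun m _ => by split_ifs <;> simp

lemma crossing_add_left (x x' y : Fin n → ℕ) :
    crossing (x + x') y = crossing x y + crossing x' y := by
  simp only [crossing_eq_sum_left, Pi.add_apply, add_mul, sum_add_distrib]

lemma crossing_add_right (x y y' : Fin n → ℕ) :
    crossing x (y + y') = crossing x y + crossing x y' := by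
  simp only [crossing_eq_sum_right, Pi.add_apply, add_mul, sum_add_distrib]

lemma crossing_single_left (i : Fin n) (c : ℕ) (y : Fin n → ℕ) :
    crossing (Pi.single i c) y = c * ∑ l ∈ Iio i, y l := by
  simp [crossing_eq_sum_left, Pi.single_apply]

lemma crossing_single_right (x : Fin n → ℕ) (l : Fin n) (c : ℕ) :
    crossing x (Pi.single l c) = c * ∑ m ∈ Ioi l, x m := by
  simp [crossing_eq_sum_right, Pi.single_apply]

section SetPair

variable {i j : Fin n}

def setPair (i j : Fin n) (α : Fin n → Fin 2) (p : Fin 2 × Fin 2) : Fin n → Fin 2 :=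
  update (update α i p.1) j p.2

lemma setPair_apply_left (hij : i ≠ j) (α : Fin n → Fin 2) (p : Fin 2 × Fin 2) :
    setPair i j α p i = p.1 := by
  simp [setPair, hij]

lemma setPair_apply_right (α : Fin n → Fin 2) (p : Fin 2 × Fin 2) :
    setPair i j α p j = p.2 := by
  simp [setPair]

lemma setPair_apply_of_ne (α : Fin n → Fin 2) (p : Fin 2 × Fin 2) {l : Fin n} (hi : l ≠ i)
    (hj : l ≠ j) : setPair i j α p l = α l := by
  simp [setPair, hi, hj]

lemma setPair_setPair (α : Fin n → Fin 2) (p p' : Fin 2 × Fin 2) :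
    setPair i j (setPair i j α p) p' = setPair i j α p' := by
  ext l
  simp only [setPair, update_apply]
  split_ifs <;> rfl

lemma setPair_self (α : Fin n → Fin 2) : setPair i j α (α i, α j) = α := by
  simp [setPair]

lemma setPair_add (α β : Fin n → Fin 2) (a b : Fin 2 × Fin 2) :
    setPair i j α a + setPair i j β b = setPair i j (α + β) (a + b) := by
  simp only [setPair, ← update_add, Prod.fst_add, Prod.snd_add]

lemma setPair_mul (α β : Fin n → Fin 2) (a b : Fin 2 × Fin 2) :
    setPair i j α a * setPair i j β b = setPair i j (α * β) (a * b) := by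
  simp only [setPair, ← update_mul, Prod.fst_mul, Prod.snd_mul]

lemma setPair_inj_iff (hij : i ≠ j) {α β : Fin n → Fin 2} {a b : Fin 2 × Fin 2} :
    setPair i j α a = setPair i j β b ↔ setPair i j α 0 = setPair i j β 0 ∧ a = b := by
  constructor
  · intro h
    refine ⟨by rw [← setPair_setPair α a, h, setPair_setPair], Prod.ext ?_ ?_⟩
    · simpa [setPair_apply_left hij] using congrFun h i
    · simpa [setPair_apply_right] using congrFun h j
  · rintro ⟨h, rfl⟩
    rw [← setPair_setPair α 0, h, setPair_setPair]

lemma setPair_eq_zero_iff (hij : i ≠ j) {α : Fin n → Fin 2} {a : Fin 2 × Fin 2} :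
    setPair i j α a = 0 ↔ setPair i j α 0 = 0 ∧ a = 0 := by
  have h0 : setPair i j (0 : Fin n → Fin 2) 0 = 0 := by simp [setPair]
  conv_lhs => rw [← h0]
  rw [setPair_inj_iff hij, h0]

lemma val_comp_setPair (hij : i ≠ j) (α : Fin n → Fin 2) (p : Fin 2 × Fin 2) :
    Fin.val ∘ setPair i j α p
      = Fin.val ∘ setPair i j α 0 + Pi.single i (p.1 : ℕ) + Pi.single j (p.2 : ℕ) := by
  ext l
  by_cases hi : l = i
  · subst hi; simp [setPair_apply_left hij, hij]
  by_cases hj : l = j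
  · subst hj; simp [setPair_apply_right, Ne.symm hij]
  simp [setPair_apply_of_ne _ _ hi hj, hi, hj]

lemma sum_Iio_eq_of_succ (hij : (i : ℕ) + 1 = j) {y : Fin n → ℕ} (hy : y i = 0) :
    ∑ l ∈ Iio j, y l = ∑ l ∈ Iio i, y l := by
  refine (sum_subset (Iio_subset_Iio (Fin.le_def.2 (by omega))) fun l hl hl' => ?_).symm
  simp only [mem_Iio, Fin.lt_def, not_lt] at hl hl'
  rwa [show l = i from Fin.ext (by omega)]

lemma sum_Ioi_eq_of_succ (hij : (i : ℕ) + 1 = j) {x : Fin n → ℕ} (hx : x j = 0) :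
    ∑ m ∈ Ioi i, x m = ∑ m ∈ Ioi j, x m := by
  refine (sum_subset (Ioi_subset_Ioi (Fin.le_def.2 (by omega))) fun m hm hm' => ?_).symm
  simp only [mem_Ioi, Fin.lt_def, not_lt] at hm hm'
  rwa [show m = j from Fin.ext (by omega)]

lemma crossing_setPair (hij : (i : ℕ) + 1 = j) (α β : Fin n → Fin 2) (a b : Fin 2 × Fin 2) :
    crossing (Fin.val ∘ setPair i j α a) (Fin.val ∘ setPair i j β b)
      = crossing (Fin.val ∘ setPair i j α 0) (Fin.val ∘ setPair i j β 0)
        + (∑ l ∈ Iio i, (setPair i j β 0 l : ℕ)) * ((a.1 : ℕ) + a.2)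
        + (∑ m ∈ Ioi j, (setPair i j α 0 m : ℕ)) * ((b.1 : ℕ) + b.2)
        + (a.2 : ℕ) * b.1 := by
  have hne : i ≠ j := Fin.ne_of_val_ne (by omega)
  have hlt : i < j := Fin.lt_def.2 (by omega)
  rw [val_comp_setPair hne α, val_comp_setPair hne β]
  simp only [crossing_add_left, crossing_add_right, crossing_single_left, crossing_single_right,
    Pi.add_apply, sum_add_distrib, sum_pi_single', mem_Ioi, lt_irrefl, hlt,
    not_lt_of_gt hlt, if_true, if_false]
  rw [sum_Iio_eq_of_succ hij (by simp [setPair_apply_left hne]),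
    sum_Ioi_eq_of_succ hij (by simp [setPair_apply_right])]
  simp only [comp_apply]
  ring

end SetPair

lemma mul2_add_left (f f' g : T n) : mul2 n (f + f') g = mul2 n f g + mul2 n f' g := by
  ext γ
  simp only [mul2, Pi.add_apply, ← sum_add_distrib]
  exact sum_congr rfl fun α _ => by split_ifs <;> ring

lemma mul2_add_right (f g g' : T n) : mul2 n f (g + g') = mul2 n f g + mul2 n f g' := by
  ext γ
  simp only [mul2, Pi.add_apply, ← sum_add_distrib]
  exact sum_congr rfl fun α _ => by split_ifs <;> ring

lemma mul2_smul_left (c : K) (f g : T n) : mul2 n (c • f) g = c • mul2 n f g := by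
  ext γ
  simp only [mul2, Pi.smul_apply, smul_eq_mul, mul_sum]
  exact sum_congr rfl fun α _ => by split_ifs <;> ring

lemma mul2_smul_right (c : K) (f g : T n) : mul2 n f (c • g) = c • mul2 n f g := by
  ext γ
  simp only [mul2, Pi.smul_apply, smul_eq_mul, mul_sum]
  exact sum_congr rfl fun α _ => by split_ifs <;> ring

def mul2ₗ (n : ℕ) : T n →ₗ[K] T n →ₗ[K] T n :=
  LinearMap.mk₂ K (mul2 n) mul2_add_left mul2_smul_left mul2_add_right mul2_smul_right

@[simp]
lemma mul2ₗ_apply (f g : T n) : mul2ₗ n f g = mul2 n f g := rfl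

lemma v_eq_single (α : Fin n → Fin 2) : v n α = Pi.single α 1 := by
  ext β
  simp [v, Pi.single_apply]

lemma mul2_v_v (α β : Fin n → Fin 2) :
    mul2 n (v n α) (v n β)
      = if α * β = 0 then (-1 : K) ^ crossing (Fin.val ∘ α) (Fin.val ∘ β) • v n (α + β) else 0 := by
  have hsplit : ∀ γ : Fin n → Fin 2,
      ((∀ l, α l = 1 → γ l = 1) ∧ (fun l => if α l = 1 then 0 else γ l) = β)
        ↔ (α * β = 0 ∧ γ = α + β) := by
    intro γ
    have hpt : ∀ a b c : Fin 2, ((a = 1 → c = 1) ∧ (if a = 1 then 0 else c) = b)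
        ↔ (a * b = 0 ∧ c = a + b) := by decide
    simp only [funext_iff, Pi.mul_apply, Pi.add_apply, Pi.zero_apply, ← forall_and, hpt]
  ext γ
  rw [mul2, sum_eq_single α (fun α' _ h => by simp [v, h]) (by simp)]
  by_cases h : (∀ l, α l = 1 → γ l = 1) ∧ (fun l => if α l = 1 then 0 else γ l) = β
  · obtain ⟨h₁, h₂⟩ := h
    obtain ⟨hαβ, rfl⟩ := (hsplit γ).1 ⟨h₁, h₂⟩
    rw [if_pos h₁, h₂, if_pos hαβ]
    simp [v, crossing]
  · have hRHS : (if α * β = 0 then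
        (-1 : K) ^ crossing (Fin.val ∘ α) (Fin.val ∘ β) • v n (α + β) else 0) γ = 0 := by
      split_ifs with hαβ
      · simpa [v] using fun hγ => h ((hsplit γ).2 ⟨hαβ, hγ⟩)
      · rfl
    rw [hRHS]
    split_ifs with h₁
    · simpa [v] using fun h₂ => h ⟨h₁, h₂⟩
    · rfl

section LocalProduct

variable {V W : Type*} [AddCommGroup V] [Module K V] [AddCommGroup W] [Module K W]

/- `m(v_α, v_β)` seen from two strands on which `α` and `β` read `a` and `b`: `y` and `x` stand
for the signs contributed by the 1s of `β` left of the strands and of `α` right of them. -/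
def localProd (y x : K) (e : Fin 2 × Fin 2 → V) (a b : Fin 2 × Fin 2) : V :=
  if a * b = 0 then
    (y ^ ((a.1 : ℕ) + a.2) * x ^ ((b.1 : ℕ) + b.2) * (-1) ^ ((a.2 : ℕ) * b.1)) • e (a + b)
  else 0

lemma map_localProd (f : V →ₗ[K] W) (y x : K) (e : Fin 2 × Fin 2 → V) (a b : Fin 2 × Fin 2) :
    f (localProd y x e a b) = localProd y x (f ∘ e) a b := by
  unfold localProd
  split_ifs <;> simp

-- `Rmat` preserves the number of 1s, so the powers of `y` and `x` factor through both sides.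
lemma sum_Rmat_smul_localProd (y x : K) (e : Fin 2 × Fin 2 → V) (a₀ b₀ : Fin 2 × Fin 2) :
    ∑ a, ∑ b, (Rmat a a₀ * Rmat b b₀) • localProd y x e a b
      = q • localProd y x (fun c => ∑ c', Rmat c' c • e c') a₀ b₀ := by
  have hq : q ≠ 0 := RatFunc.X_ne_zero
  simp only [Fintype.sum_prod_type, Fin.sum_univ_two]
  fin_cases a₀ <;> fin_cases b₀ <;>
  · simp [localProd, Rmat, smul_smul]
    try (congr 1; field_simp)

end LocalProduct

section Equivariance

variable {i j : Fin n}

lemma PhiAux_v_setPair (hij : i ≠ j) (α : Fin n → Fin 2) (p : Fin 2 × Fin 2) :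
    PhiAux n i j (v n (setPair i j α p)) = ∑ c, Rmat c p • v n (setPair i j α c) := by
  ext β
  have hβ : ∀ c, β = setPair i j α c ↔ setPair i j β 0 = setPair i j α 0 ∧ (β i, β j) = c := by
    intro c
    conv_lhs => rw [← setPair_self (i := i) (j := j) β]
    exact setPair_inj_iff hij
  calc PhiAux n i j (v n (setPair i j α p)) β
      = ∑ c, Rmat (β i, β j) c * if setPair i j β 0 = setPair i j α 0 ∧ c = p then 1 else 0 := by
        change ∑ c, Rmat (β i, β j) c * v n (setPair i j α p) (setPair i j β c) = _
        refine sum_congr rfl fun c _ => ?_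
        exact congrArg _ (if_congr (setPair_inj_iff hij) rfl rfl)
    _ = ∑ c, Rmat c p * if setPair i j β 0 = setPair i j α 0 ∧ (β i, β j) = c then 1 else 0 := by
        simp [ite_and]
    _ = (∑ c, Rmat c p • v n (setPair i j α c)) β := by
        simp only [Finset.sum_apply, Pi.smul_apply, smul_eq_mul, v, hβ]

lemma mul2_v_setPair (hij : (i : ℕ) + 1 = j) (α β : Fin n → Fin 2) (a b : Fin 2 × Fin 2) :
    mul2 n (v n (setPair i j α a)) (v n (setPair i j β b))
      = if setPair i j (α * β) 0 = 0 then
          (-1 : K) ^ crossing (Fin.val ∘ setPair i j α 0) (Fin.val ∘ setPair i j β 0) •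
            localProd ((-1) ^ ∑ l ∈ Iio i, (setPair i j β 0 l : ℕ))
              ((-1) ^ ∑ m ∈ Ioi j, (setPair i j α 0 m : ℕ))
              (fun c => v n (setPair i j (α + β) c)) a b
        else 0 := by
  have hne : i ≠ j := Fin.ne_of_val_ne (by omega)
  rw [mul2_v_v, setPair_mul, if_congr (setPair_eq_zero_iff hne) rfl rfl, setPair_add,
    crossing_setPair hij]
  by_cases h : setPair i j (α * β) 0 = 0
  · by_cases hab : a * b = 0
    · simp only [localProd, h, hab, and_self, if_true, smul_smul, pow_add, pow_mul]
      congr 1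
      ring
    · simp [localProd, h, hab]
  · simp [h]

lemma mul2_PhiAux_v_setPair (hij : (i : ℕ) + 1 = j) (α β : Fin n → Fin 2) (a b : Fin 2 × Fin 2) :
    mul2 n (PhiAux n i j (v n (setPair i j α a))) (PhiAux n i j (v n (setPair i j β b)))
      = q • PhiAux n i j (mul2 n (v n (setPair i j α a)) (v n (setPair i j β b))) := by
  have hne : i ≠ j := Fin.ne_of_val_ne (by omega)
  have he : ⇑(PhiAux n i j) ∘ (fun c => v n (setPair i j (α + β) c))
      = fun c => ∑ c', Rmat c' c • v n (setPair i j (α + β) c') :=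
    funext fun c => PhiAux_v_setPair hne _ c
  simp only [PhiAux_v_setPair hne, ← mul2ₗ_apply, map_sum, map_smul, LinearMap.sum_apply,
    LinearMap.smul_apply]
  simp only [mul2ₗ_apply, mul2_v_setPair hij]
  split_ifs with h
  · rw [map_smul, map_localProd, he, smul_comm q, ← sum_Rmat_smul_localProd, smul_sum]
    simp only [smul_sum, smul_smul]
    rw [sum_comm]
    exact sum_congr rfl fun c _ => sum_congr rfl fun c' _ => by congr 1; ring
  · simp

lemma mul2_PhiAux (hij : (i : ℕ) + 1 = j) (f g : T n) :
    mul2 n (PhiAux n i j f) (PhiAux n i j g) = q • PhiAux n i j (mul2 n f g) := by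
  have hbasis : (mul2ₗ n).compl₁₂ (PhiAux n i j) (PhiAux n i j)
      = q • (mul2ₗ n).compr₂ (PhiAux n i j) := by
    refine LinearMap.ext_basis (Pi.basisFun K _) (Pi.basisFun K _) fun α β => ?_
    simpa [← v_eq_single, setPair_self] using
      mul2_PhiAux_v_setPair hij α β (α i, α j) (β i, β j)
  exact LinearMap.congr_fun₂ hbasis f g

end Equivariance

lemma mul2_Phi (t : ℕ) (f g : T n) :
    mul2 n (Phi n t f) (Phi n t g) = q • Phi n t (mul2 n f g) := by
  unfold Phi
  split_ifs with ht
  · exact mul2_PhiAux (by simp; omega) f g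
  · simp [← mul2ₗ_apply]

lemma Psi_map_of_mul2_map {F : T n →ₗ[K] T n} {c : K}
    (hF : ∀ f g, mul2 n (F f) (F g) = c • F (mul2 n f g)) (k : ℕ) (u : Fin (k + 1) → T n) :
    Psi n (k + 1) (fun l => F (u l)) = c ^ k • F (Psi n (k + 1) u) := by
  induction k with
  | zero => simp [Psi]
  | succ k ih =>
    rw [Psi, ih, mul2_smul_left, hF, smul_smul, ← pow_succ, Psi]

end TwistedEquivariance

theorem stmt0_general (n k t : ℕ) (hk1 : 1 ≤ k) (u : Fin k → T n) :
    Psi n k (fun i => Phi n t (u i)) = q ^ (k - 1) • Phi n t (Psi n k u) := by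
  obtain ⟨k, rfl⟩ : ∃ k', k = k' + 1 := ⟨k - 1, by omega⟩
  exact Psi_map_of_mul2_map (mul2_Phi t) k u

theorem stmt0 (n k t : ℕ) (hn : 2 ≤ n) (hk1 : 1 ≤ k) (hk2 : k ≤ n - 1)
    (ht1 : 1 ≤ t) (ht2 : t ≤ n - 1) (u : Fin k → T n) (hu : ∀ i, u i ∈ Hk n 1) :
    Psi n k (fun i => Phi n t (u i)) = q ^ (k - 1) • Phi n t (Psi n k u) :=
  stmt0_general n k t hk1 u

end
end

section
/- Let n ≥ 2 and fix j with 0 ≤ j ≤ n−1. For every integer d, there exists N ∈ ℕ such that for all m ≥ N, the degree-d coefficient of the Laurent series expansion of Σ_{i=0}^{n−1} q^{2mn(n−1−i)} · C(n)_{i+1, j+1} equals the degree-d coefficient of the Laurent series expansion of C(n)_{n, j+1}. (Stabilization of the twist-insertion coefficients as the number of full twists tends to infinity.) -/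
open scoped BigOperators

set_option maxHeartbeats 1000000
set_option synthInstance.maxHeartbeats 400000

noncomputable section

/-! Multiplying by `q ^ e` shifts Laurent coefficients by `e`, so every summand with
`i < n - 1` carries a factor `q ^ e` with `e ≥ m` and its degree-`d` coefficient vanishes as soon
as `d - m` drops below the order of `C(n)_{i+1, j+1}`; only the `i = n - 1` summand survives. -/

namespace RatFunc

open Filter

variable {F : Type*} [Field F]

theorem coeff_coe_X_pow_mul (f : RatFunc F) (e : ℕ) (d : ℤ) :
    ((X ^ e * f : RatFunc F) : LaurentSeries F).coeff d = (f : LaurentSeries F).coeff (d - e) := by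
  rw [map_mul, map_pow, coe_X, HahnSeries.single_pow, HahnSeries.coeff_single_mul, one_pow,
    one_mul, nsmul_one]

theorem eventually_coeff_coe_X_pow_mul_eq_zero (f : RatFunc F) (d : ℤ) :
    ∀ᶠ e : ℕ in atTop, ((X ^ e * f : RatFunc F) : LaurentSeries F).coeff d = 0 := by
  filter_upwards [eventually_gt_atTop (d - (f : LaurentSeries F).order).toNat] with e he
  rw [coeff_coe_X_pow_mul]
  exact HahnSeries.coeff_eq_zero_of_lt_order (by omega)

theorem eventually_coeff_coe_sum_X_pow_mul {ι : Type*} [Fintype ι]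
    (f : ι → RatFunc F) (e : ι → ℕ → ℕ) (i₀ : ι) (he₀ : ∀ m, e i₀ m = 0)
    (he : ∀ i ≠ i₀, Tendsto (e i) atTop atTop) (d : ℤ) :
    ∀ᶠ m in atTop, ((∑ i, X ^ e i m * f i : RatFunc F) : LaurentSeries F).coeff d =
      (f i₀ : LaurentSeries F).coeff d := by
  have hvanish : ∀ᶠ m in atTop, ∀ i ≠ i₀,
      ((X ^ e i m * f i : RatFunc F) : LaurentSeries F).coeff d = 0 :=
    eventually_all.2 fun i => by
      rcases eq_or_ne i i₀ with rfl | hi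
      · exact .of_forall fun _ h => (h rfl).elim
      · exact ((he i hi).eventually (eventually_coeff_coe_X_pow_mul_eq_zero (f i) d)).mono
          fun _ hm _ => hm
  filter_upwards [hvanish] with m hm
  rw [map_sum, HahnSeries.coeff_sum, Finset.sum_eq_single_of_mem i₀ (Finset.mem_univ _)
    fun i _ hi => hm i hi, he₀, pow_zero, one_mul]

end RatFunc

theorem stmt7 (n : ℕ) (hn : 2 ≤ n) (j : Fin n) (d : ℤ) :
    ∃ N : ℕ, ∀ m : ℕ, N ≤ m →
      (((∑ i : Fin n, q ^ (2 * m * n * (n - 1 - (i : ℕ))) * Cmat n i j : K) :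
          LaurentSeries ℂ)).coeff d
        = (((Cmat n ⟨n - 1, by omega⟩ j : K) : LaurentSeries ℂ)).coeff d := by
  have hexp_tendsto : ∀ i : Fin n, i ≠ ⟨n - 1, by omega⟩ →
      Filter.Tendsto (fun m : ℕ => 2 * m * n * (n - 1 - (i : ℕ))) .atTop .atTop := by
    intro i hi
    have hc : 0 < n - 1 - (i : ℕ) := by
      have : (i : ℕ) ≠ n - 1 := Fin.val_ne_iff.2 hi
      omega
    refine Filter.tendsto_atTop_mono (fun m => ?_) Filter.tendsto_id
    calc m ≤ m * (2 * n * (n - 1 - (i : ℕ))) := Nat.le_mul_of_pos_right m (by positivity)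
      _ = 2 * m * n * (n - 1 - (i : ℕ)) := by ring
  exact Filter.eventually_atTop.1 <| RatFunc.eventually_coeff_coe_sum_X_pow_mul
    (fun i => Cmat n i j) _ ⟨n - 1, by omega⟩ (fun m => by simp) hexp_tendsto d

end
end
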